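/- Let u_n(m,a) denote the number of Catalan words of length n avoiding the vincular pattern 2-21 whose largest letter is m and whose last letter is a, with u_n(m,a) = 0 unless 1 ≤ a ≤ m ≤ n. Then u_n(1,1) = 1 for all n ≥ 1, u_2(2,1) = 0, u_2(2,2) = 1, and for all n ≥ 3 and 2 ≤ m ≤ n: (i) u_n(m,a) = u_{n−1}(m,a−1) + u_{n−1}(m,a) + u_{n−2}(m−1,m−1) for all 1 ≤ a ≤ m−1 (where u_{n−1}(m,0) := 0); and (ii) u_n(m,m) = u_{n−1}(m−1,m−1) + u_{n−1}(m,m−1) + u_{n−1}(m,m). -/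
import Mathlib


/-- A Catalan word: a word of positive integers starting with 1 in which each
letter exceeds its predecessor by at most 1. -/
def IsCatalanWord {n : ℕ} (w : Fin n → ℕ) : Prop :=
  (∀ i, 1 ≤ w i) ∧ (∀ h : 0 < n, w ⟨0, h⟩ = 1) ∧
  ∀ i : ℕ, ∀ h : i + 1 < n, w ⟨i + 1, h⟩ ≤ w ⟨i, by omega⟩ + 1

/-- `w` contains the vincular pattern 2-21: there are indices `i < j` with
`w i = w j > w (j+1)`. -/
def Contains2_21 {n : ℕ} (w : Fin n → ℕ) : Prop :=
  ∃ i j : ℕ, ∃ hj : j + 1 < n, ∃ hij : i < j,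
    w ⟨i, by omega⟩ = w ⟨j, by omega⟩ ∧ w ⟨j + 1, hj⟩ < w ⟨j, by omega⟩

/-- `u n m a`: the number of Catalan words of length `n` avoiding 2-21 whose
largest letter is `m` and whose last letter is `a` (zero in degenerate cases). -/
noncomputable def u (n m a : ℕ) : ℕ :=
  Set.ncard {w : Fin n → ℕ | IsCatalanWord w ∧ ¬ Contains2_21 w ∧
    (∀ i, w i ≤ m) ∧ (∃ i, w i = m) ∧ ∃ h : 0 < n, w ⟨n - 1, by omega⟩ = a}

def W (n m a : ℕ) : Set (Fin n → ℕ) :=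
  {w : Fin n → ℕ | IsCatalanWord w ∧ ¬ Contains2_21 w ∧
    (∀ i, w i ≤ m) ∧ (∃ i, w i = m) ∧ ∃ h : 0 < n, w ⟨n - 1, by omega⟩ = a}

lemma u_eq (n m a : ℕ) : u n m a = (W n m a).ncard := rfl

lemma windex {n : ℕ} (w : Fin n → ℕ) {x y : ℕ} (h : x = y) (hx : x < n) (hy : y < n) :
    w ⟨x, hx⟩ = w ⟨y, hy⟩ := by subst h; rfl

lemma bdd_finite {n m : ℕ} {S : Set (Fin n → ℕ)} (h : ∀ w ∈ S, ∀ i, w i ≤ m) : S.Finite := by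
  apply Set.Finite.subset (Set.Finite.pi (fun _ : Fin n => Set.finite_Iic m))
  intro w hw
  simp only [Set.mem_pi, Set.mem_univ, Set.mem_Iic, forall_true_left]
  exact fun i => h w hw i

lemma W_finite (n m a : ℕ) : (W n m a).Finite :=
  bdd_finite (fun w hw => hw.2.2.1)

/-- intermediate value: every value between 1 and w k occurs at some index ≤ k -/
lemma cat_ivt {n : ℕ} {w : Fin n → ℕ} (hw : IsCatalanWord w) :
    ∀ k, ∀ hk : k < n, ∀ v, 1 ≤ v → v ≤ w ⟨k, hk⟩ →
      ∃ i, ∃ hik : i ≤ k, w ⟨i, by omega⟩ = v := by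
  intro k
  induction k with
  | zero =>
    intro hk v h1 h2
    exact ⟨0, le_refl 0, by have := hw.2.1 hk; omega⟩
  | succ k ih =>
    intro hk v h1 h2
    by_cases hc : v ≤ w ⟨k, by omega⟩
    · obtain ⟨i, hik, hi⟩ := ih (by omega) v h1 hc
      exact ⟨i, by omega, hi⟩
    · have hstep := hw.2.2 k hk
      refine ⟨k + 1, le_refl _, by omega⟩

/-! ### truncation and extension maps -/

def tr1 {n : ℕ} (w : Fin n → ℕ) : Fin (n - 1) → ℕ :=
  fun i => w ⟨i.1, by have := i.2; omega⟩

def tr2 {n : ℕ} (w : Fin n → ℕ) : Fin (n - 2) → ℕ :=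
  fun i => w ⟨i.1, by have := i.2; omega⟩

def ex1 {n : ℕ} (v : Fin (n - 1) → ℕ) (c : ℕ) : Fin n → ℕ :=
  fun i => if h : i.1 < n - 1 then v ⟨i.1, h⟩ else c

def ex2 {n : ℕ} (v : Fin (n - 2) → ℕ) (c d : ℕ) : Fin n → ℕ :=
  fun i => if h : i.1 < n - 2 then v ⟨i.1, h⟩ else if i.1 = n - 2 then c else d

lemma tr1_eq {n : ℕ} (w : Fin n → ℕ) {i : ℕ} (h : i < n - 1) (h' : i < n) :
    tr1 w ⟨i, h⟩ = w ⟨i, h'⟩ := rfl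

lemma tr2_eq {n : ℕ} (w : Fin n → ℕ) {i : ℕ} (h : i < n - 2) (h' : i < n) :
    tr2 w ⟨i, h⟩ = w ⟨i, h'⟩ := rfl

lemma ex1_lt {n : ℕ} (v : Fin (n - 1) → ℕ) (c : ℕ) {i : ℕ} (h : i < n - 1) (hn : i < n) :
    ex1 v c ⟨i, hn⟩ = v ⟨i, h⟩ := dif_pos h

lemma ex1_last {n : ℕ} (v : Fin (n - 1) → ℕ) (c : ℕ) {i : ℕ} (h : ¬ i < n - 1) (hn : i < n) :
    ex1 v c ⟨i, hn⟩ = c := dif_neg h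

lemma ex2_lt {n : ℕ} (v : Fin (n - 2) → ℕ) (c d : ℕ) {i : ℕ} (h : i < n - 2) (hn : i < n) :
    ex2 v c d ⟨i, hn⟩ = v ⟨i, h⟩ := dif_pos h

lemma ex2_mid {n : ℕ} (v : Fin (n - 2) → ℕ) (c d : ℕ) {i : ℕ} (h : i = n - 2) (hn : i < n) :
    ex2 v c d ⟨i, hn⟩ = c := by
  have h1 : ¬ i < n - 2 := by omega
  simp [ex2, h1, h]

lemma ex2_last {n : ℕ} (v : Fin (n - 2) → ℕ) (c d : ℕ) {i : ℕ} (h : n - 2 < i) (hn : i < n) :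
    ex2 v c d ⟨i, hn⟩ = d := by
  have h1 : ¬ i < n - 2 := by omega
  have h2 : ¬ i = n - 2 := by omega
  simp [ex2, h1, h2]

lemma tr1_ex1 {n : ℕ} (v : Fin (n - 1) → ℕ) (c : ℕ) : tr1 (ex1 v c) = v := by
  funext i
  have hi := i.2
  have : tr1 (ex1 v c) i = ex1 v c ⟨i.1, by omega⟩ := rfl
  rw [this, ex1_lt v c hi]

lemma tr2_ex2 {n : ℕ} (v : Fin (n - 2) → ℕ) (c d : ℕ) : tr2 (ex2 v c d) = v := by
  funext i
  have hi := i.2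
  have : tr2 (ex2 v c d) i = ex2 v c d ⟨i.1, by omega⟩ := rfl
  rw [this, ex2_lt v c d hi]

lemma tr1_injOn {n : ℕ} (c : ℕ) (S : Set (Fin n → ℕ)) (hn : 1 ≤ n)
    (h : ∀ w ∈ S, w ⟨n - 1, by omega⟩ = c) : Set.InjOn tr1 S := by
  intro w1 h1 w2 h2 he
  funext i
  have hi := i.2
  rcases Nat.lt_or_ge i.1 (n - 1) with hc | hc
  · have := congrFun he ⟨i.1, hc⟩
    rw [tr1_eq w1 hc hi, tr1_eq w2 hc hi] at this
    simpa using this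
  · have hieq : i = ⟨n - 1, by omega⟩ := Fin.ext (by simp; omega)
    rw [hieq, h w1 h1, h w2 h2]

lemma tr2_injOn {n : ℕ} (c d : ℕ) (S : Set (Fin n → ℕ)) (hn : 2 ≤ n)
    (h : ∀ w ∈ S, w ⟨n - 2, by omega⟩ = c ∧ w ⟨n - 1, by omega⟩ = d) :
    Set.InjOn tr2 S := by
  intro w1 h1 w2 h2 he
  funext i
  have hi := i.2
  rcases Nat.lt_or_ge i.1 (n - 2) with hc | hc
  · have := congrFun he ⟨i.1, hc⟩
    rw [tr2_eq w1 hc hi, tr2_eq w2 hc hi] at this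
    simpa using this
  · rcases Nat.lt_or_ge i.1 (n - 1) with hc2 | hc2
    · have hieq : i = ⟨n - 2, by omega⟩ := Fin.ext (by simp; omega)
      rw [hieq, (h w1 h1).1, (h w2 h2).1]
    · have hieq : i = ⟨n - 1, by omega⟩ := Fin.ext (by simp; omega)
      rw [hieq, (h w1 h1).2, (h w2 h2).2]

/-! ### preservation lemmas -/

lemma tr1_cat {n : ℕ} {w : Fin n → ℕ} (hw : IsCatalanWord w) : IsCatalanWord (tr1 w) := by
  refine ⟨fun i => hw.1 _, fun h => hw.2.1 (by omega), fun i h => ?_⟩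
  exact hw.2.2 i (by omega)

lemma tr2_cat {n : ℕ} {w : Fin n → ℕ} (hw : IsCatalanWord w) : IsCatalanWord (tr2 w) := by
  refine ⟨fun i => hw.1 _, fun h => hw.2.1 (by omega), fun i h => ?_⟩
  exact hw.2.2 i (by omega)

lemma tr1_avoid {n : ℕ} {w : Fin n → ℕ} (hw : ¬ Contains2_21 w) : ¬ Contains2_21 (tr1 w) := by
  rintro ⟨i, j, hj, hij, h1, h2⟩
  exact hw ⟨i, j, by omega, hij, h1, h2⟩

lemma tr2_avoid {n : ℕ} {w : Fin n → ℕ} (hw : ¬ Contains2_21 w) : ¬ Contains2_21 (tr2 w) := by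
  rintro ⟨i, j, hj, hij, h1, h2⟩
  exact hw ⟨i, j, by omega, hij, h1, h2⟩

lemma ex1_cat {n : ℕ} (hn : 2 ≤ n) {v : Fin (n - 1) → ℕ} (hv : IsCatalanWord v) {c : ℕ}
    (hc1 : 1 ≤ c) (hc2 : c ≤ v ⟨n - 2, by omega⟩ + 1) : IsCatalanWord (ex1 v c) := by
  refine ⟨fun i => ?_, fun h => ?_, fun i h => ?_⟩
  · rcases Nat.lt_or_ge i.1 (n - 1) with hc' | hc'
    · have : ex1 v c ⟨i.1, i.2⟩ = v ⟨i.1, hc'⟩ := ex1_lt v c hc' i.2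
      simp only [Fin.eta] at this
      rw [this]; exact hv.1 _
    · have : ex1 v c ⟨i.1, i.2⟩ = c := ex1_last v c (by omega) i.2
      simp only [Fin.eta] at this
      rw [this]; exact hc1
  · rw [ex1_lt v c (by omega) h]
    exact hv.2.1 (by omega)
  · rcases Nat.lt_or_ge (i + 1) (n - 1) with hc' | hc'
    · rw [ex1_lt v c hc' h, ex1_lt v c (by omega) (by omega)]
      exact hv.2.2 i (by omega)
    · have hi1 : i + 1 = n - 1 := by omega
      rw [ex1_last v c (by omega) h, ex1_lt v c (by omega) (by omega)]
      have := windex v (show i = n - 2 by omega) (by omega) (by omega)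
      omega

lemma ex1_avoid {n : ℕ} (hn : 2 ≤ n) {v : Fin (n - 1) → ℕ} (hv : ¬ Contains2_21 v) {c : ℕ}
    (hc : ¬ c < v ⟨n - 2, by omega⟩) : ¬ Contains2_21 (ex1 v c) := by
  rintro ⟨i, j, hj, hij, h1, h2⟩
  simp only [ex1] at h1 h2
  have hjlt : j < n - 1 := by omega
  have hilt : i < n - 1 := by omega
  rw [dif_pos hilt, dif_pos hjlt] at h1
  rw [dif_pos hjlt] at h2
  rcases Nat.lt_or_ge (j + 1) (n - 1) with hc' | hc'
  · rw [dif_pos hc'] at h2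
    exact hv ⟨i, j, hc', hij, h1, h2⟩
  · rw [dif_neg (by omega)] at h2
    have e := windex v (show j = n - 2 by omega) hjlt (by omega)
    rw [e] at h2
    exact hc h2

lemma ex2_cat {n : ℕ} (hn : 3 ≤ n) {v : Fin (n - 2) → ℕ} (hv : IsCatalanWord v) {c d : ℕ}
    (hd1 : 1 ≤ d) (hd2 : d ≤ c + 1) (hc1 : 1 ≤ c) (hc2 : c ≤ v ⟨n - 3, by omega⟩ + 1) :
    IsCatalanWord (ex2 v c d) := by
  refine ⟨fun i => ?_, fun h => ?_, fun i h => ?_⟩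
  · rcases Nat.lt_or_ge i.1 (n - 2) with hc' | hc'
    · have : ex2 v c d ⟨i.1, i.2⟩ = v ⟨i.1, hc'⟩ := ex2_lt v c d hc' i.2
      simp only [Fin.eta] at this
      rw [this]; exact hv.1 _
    · rcases Nat.eq_or_lt_of_le hc' with hc'' | hc''
      · have : ex2 v c d ⟨i.1, i.2⟩ = c := ex2_mid v c d (by omega) i.2
        simp only [Fin.eta] at this
        rw [this]; exact hc1
      · have : ex2 v c d ⟨i.1, i.2⟩ = d := ex2_last v c d (by omega) i.2
        simp only [Fin.eta] at this
        rw [this]; exact hd1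
  · rw [ex2_lt v c d (by omega) h]
    exact hv.2.1 (by omega)
  · rcases Nat.lt_or_ge (i + 1) (n - 2) with hc' | hc'
    · rw [ex2_lt v c d hc' h, ex2_lt v c d (by omega) (by omega)]
      exact hv.2.2 i (by omega)
    · rcases Nat.eq_or_lt_of_le hc' with hc'' | hc''
      · rw [ex2_mid v c d (by omega) h, ex2_lt v c d (by omega) (by omega)]
        have := windex v (show i = n - 3 by omega) (by omega) (by omega)
        omega
      · have hi1 : i + 1 = n - 1 := by omega
        rw [ex2_last v c d (by omega) h, ex2_mid v c d (by omega) (by omega)]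
        exact hd2

lemma ex2_avoid {n : ℕ} (hn : 3 ≤ n) {v : Fin (n - 2) → ℕ} (hv : ¬ Contains2_21 v) {c d : ℕ}
    (hlt : ∀ i, v i < c) : ¬ Contains2_21 (ex2 v c d) := by
  rintro ⟨i, j, hj, hij, h1, h2⟩
  simp only [ex2] at h1 h2
  rcases Nat.lt_or_ge (j + 1) (n - 2) with hc1 | hc1
  · have hjlt : j < n - 2 := by omega
    have hilt : i < n - 2 := by omega
    rw [dif_pos hilt, dif_pos hjlt] at h1
    rw [dif_pos hjlt, dif_pos hc1] at h2
    exact hv ⟨i, j, hc1, hij, h1, h2⟩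
  · rcases Nat.eq_or_lt_of_le hc1 with hc2 | hc2
    · -- j + 1 = n - 2, so j < n - 2 and ex2 at j+1 equals c
      have hjlt : j < n - 2 := by omega
      rw [dif_pos hjlt] at h1 h2
      rw [dif_neg (by omega), if_pos (by omega)] at h2
      exact absurd (hlt ⟨j, hjlt⟩) (by omega)
    · -- j + 1 = n - 1, so j = n - 2
      have hjeq : j = n - 2 := by omega
      have hilt : i < n - 2 := by omega
      rw [dif_pos hilt, dif_neg (by omega), if_pos (by omega)] at h1
      exact absurd (hlt ⟨i, hilt⟩) (by omega)

/-! ### disjointness, cardinality helpers -/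

lemma W_disj_max {k m1 a1 m2 a2 : ℕ} (h : m1 < m2) : Disjoint (W k m1 a1) (W k m2 a2) := by
  rw [Set.disjoint_left]
  rintro w ⟨_, _, hle, _, _⟩ ⟨_, _, _, ⟨i, hi⟩, _⟩
  have := hle i
  omega

lemma W_disj_last {k m1 a1 m2 a2 : ℕ} (h : a1 ≠ a2) : Disjoint (W k m1 a1) (W k m2 a2) := by
  rw [Set.disjoint_left]
  rintro w ⟨_, _, _, _, hp, hl1⟩ ⟨_, _, _, _, _, hl2⟩
  exact h (hl1 ▸ hl2 ▸ rfl)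

lemma ncard_union3 {α : Type*} (A B C : Set α) (hA : A.Finite) (hB : B.Finite) (hC : C.Finite)
    (hAB : Disjoint A B) (hAC : Disjoint A C) (hBC : Disjoint B C) :
    (A ∪ B ∪ C).ncard = A.ncard + B.ncard + C.ncard := by
  rw [Set.ncard_union_eq (by exact Disjoint.union_left hAC hBC) (hA.union hB) hC,
    Set.ncard_union_eq hAB hA hB]

/-! ### base cases -/

lemma u_one (n : ℕ) (hn : 1 ≤ n) : u n 1 1 = 1 := by
  rw [u_eq]
  have : W n 1 1 = {fun _ => 1} := by
    ext w
    constructor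
    · rintro ⟨⟨hge, _, _⟩, _, hle, _, _⟩
      funext i
      have := hge i; have := hle i
      omega
    · rintro rfl
      refine ⟨⟨fun _ => le_refl 1, fun _ => rfl, fun _ _ => by norm_num⟩, ?_, fun _ => le_refl 1,
        ⟨⟨0, by omega⟩, rfl⟩, by omega, rfl⟩
      rintro ⟨i, j, hj, hij, h1, h2⟩
      norm_num at h2
  rw [this, Set.ncard_singleton]

lemma u_2_2_1 : u 2 2 1 = 0 := by
  rw [u_eq]
  have : W 2 2 1 = ∅ := by
    rw [Set.eq_empty_iff_forall_notMem]
    rintro w ⟨⟨hge, hfirst, hstep⟩, _, hle, ⟨i, hi⟩, hpos, hlast⟩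
    have h0 : w ⟨0, by omega⟩ = 1 := hfirst (by omega)
    have h1 : w ⟨1, by omega⟩ = 1 := by
      have := windex w (show (2:ℕ) - 1 = 1 by omega) (by omega) (by omega)
      omega
    have : i = ⟨0, by omega⟩ ∨ i = ⟨1, by omega⟩ := by
      have := i.2
      rcases Nat.lt_or_ge i.1 1 with h | h
      · exact Or.inl (Fin.ext (by simp; omega))
      · exact Or.inr (Fin.ext (by simp; omega))
    rcases this with h | h <;> rw [h] at hi <;> omega
  rw [this, Set.ncard_empty]

lemma u_2_2_2 : u 2 2 2 = 1 := by
  rw [u_eq]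
  have : W 2 2 2 = {fun i => if i.1 = 0 then 1 else 2} := by
    ext w
    constructor
    · rintro ⟨⟨hge, hfirst, hstep⟩, _, hle, _, hpos, hlast⟩
      have h0 : w ⟨0, by omega⟩ = 1 := hfirst (by omega)
      have h1 : w ⟨1, by omega⟩ = 2 := by
        have := windex w (show (2:ℕ) - 1 = 1 by omega) (by omega) (by omega)
        omega
      funext i
      have hi := i.2
      rcases Nat.lt_or_ge i.1 1 with h | h
      · have : i = ⟨0, by omega⟩ := Fin.ext (by simp; omega)
        rw [this]; simpa using h0
      · have : i = ⟨1, by omega⟩ := Fin.ext (by simp; omega)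
        rw [this]; simpa using h1
    · rintro rfl
      refine ⟨⟨fun i => by dsimp only; split <;> omega, fun _ => by norm_num, fun i h => ?_⟩,
        ?_, fun i => by dsimp only; split <;> omega, ⟨⟨1, by omega⟩, by norm_num⟩, by omega,
        by norm_num⟩
      · have : i = 0 := by omega
        subst this; norm_num
      · rintro ⟨i, j, hj, hij, h1, h2⟩
        omega
  rw [this, Set.ncard_singleton]

/-! ### case (ii) -/

lemma case_ii (n m : ℕ) (hn : 3 ≤ n) (hm : 2 ≤ m) :
    u n m m = u (n - 1) (m - 1) (m - 1) + u (n - 1) m (m - 1) + u (n - 1) m m := by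
  have hlast : ∀ w ∈ W n m m, w ⟨n - 1, by omega⟩ = m := by
    rintro w ⟨_, _, _, _, hpos, hl⟩; exact hl
  have him : tr1 '' W n m m =
      W (n - 1) (m - 1) (m - 1) ∪ W (n - 1) m (m - 1) ∪ W (n - 1) m m := by
    ext v
    constructor
    · rintro ⟨w, hw, rfl⟩
      obtain ⟨hcat, havd, hle, ⟨p, hp⟩, hpos, hl⟩ := hw
      have hstep := hcat.2.2 (n - 2) (by omega)
      have e1 : w ⟨n - 2 + 1, by omega⟩ = w ⟨n - 1, by omega⟩ :=
        windex w (by omega) (by omega) (by omega)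
      have hble : w ⟨n - 2, by omega⟩ ≤ m := hle _
      have hbge : m ≤ w ⟨n - 2, by omega⟩ + 1 := by omega
      have etr : tr1 w ⟨n - 1 - 1, by omega⟩ = w ⟨n - 2, by omega⟩ := by
        rw [tr1_eq w (by omega) (by omega)]
        exact windex w (by omega) (by omega) (by omega)
      rcases (show w ⟨n - 2, by omega⟩ = m - 1 ∨ w ⟨n - 2, by omega⟩ = m by omega) with hb | hb
      · by_cases hex : ∃ i : Fin (n - 1), tr1 w i = m
        · exact Or.inl (Or.inr ⟨tr1_cat hcat, tr1_avoid havd, fun i => hle _, hex,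
            by omega, by omega⟩)
        · push_neg at hex
          refine Or.inl (Or.inl ⟨tr1_cat hcat, tr1_avoid havd, fun i => ?_, ⟨⟨n - 2, by omega⟩, ?_⟩,
            by omega, by omega⟩)
          · have h1 := hle ⟨i.1, by have := i.2; omega⟩
            have h2 := hex i
            have : tr1 w i = w ⟨i.1, by have := i.2; omega⟩ := rfl
            omega
          · rw [tr1_eq w (by omega) (by omega)]; omega
      · refine Or.inr ⟨tr1_cat hcat, tr1_avoid havd, fun i => hle _,
          ⟨⟨n - 2, by omega⟩, ?_⟩, by omega, by omega⟩
        rw [tr1_eq w (by omega) (by omega)]; omega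
    · have hbuild : ∀ v : Fin (n - 1) → ℕ, IsCatalanWord v → ¬ Contains2_21 v →
          (∀ i, v i ≤ m) → v ⟨n - 1 - 1, by omega⟩ + 1 ≥ m → ex1 v m ∈ W n m m := by
        intro v vcat vavd vle vlastge
        have e2 : v ⟨n - 2, by omega⟩ = v ⟨n - 1 - 1, by omega⟩ :=
          windex v (by omega) (by omega) (by omega)
        refine ⟨ex1_cat (by omega) vcat (by omega) (by omega), ex1_avoid (by omega) vavd ?_,
          fun i => ?_, ⟨⟨n - 1, by omega⟩, ex1_last v m (by omega) (by omega)⟩, by omega,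
          ex1_last v m (by omega) (by omega)⟩
        · have := vle ⟨n - 2, by omega⟩
          omega
        · rcases Nat.lt_or_ge i.1 (n - 1) with hc | hc
          · have : ex1 v m ⟨i.1, i.2⟩ = v ⟨i.1, hc⟩ := ex1_lt v m hc i.2
            simp only [Fin.eta] at this
            rw [this]; exact vle _
          · have : ex1 v m ⟨i.1, i.2⟩ = m := ex1_last v m (by omega) i.2
            simp only [Fin.eta] at this
            rw [this]
      rintro ((⟨vcat, vavd, vle, vex, vpos, vlast⟩ | ⟨vcat, vavd, vle, vex, vpos, vlast⟩) |
        ⟨vcat, vavd, vle, vex, vpos, vlast⟩)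
      · exact ⟨ex1 v m, hbuild v vcat vavd (fun i => le_trans (vle i) (by omega)) (by omega),
          tr1_ex1 v m⟩
      · exact ⟨ex1 v m, hbuild v vcat vavd vle (by omega), tr1_ex1 v m⟩
      · exact ⟨ex1 v m, hbuild v vcat vavd vle (by omega), tr1_ex1 v m⟩
  rw [u_eq, ← Set.ncard_image_of_injOn (tr1_injOn m _ (by omega) hlast), him,
    ncard_union3 _ _ _ (W_finite _ _ _) (W_finite _ _ _) (W_finite _ _ _)
      (W_disj_max (by omega)) (W_disj_max (by omega)) (W_disj_last (by omega)),
    u_eq, u_eq, u_eq]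

/-! ### case (i) -/

/-- words in `W n m a` with penultimate letter `e` -/
def WP (n m a e : ℕ) : Set (Fin n → ℕ) :=
  {w | w ∈ W n m a ∧ ∀ _ : 2 ≤ n, w ⟨n - 2, by omega⟩ = e}

lemma WP_disj {n m a : ℕ} (hn : 2 ≤ n) {e1 e2 : ℕ} (h : e1 ≠ e2) :
    Disjoint (WP n m a e1) (WP n m a e2) := by
  rw [Set.disjoint_left]
  rintro w ⟨_, h1⟩ ⟨_, h2⟩
  have := h1 hn
  have := h2 hn
  omega

lemma WP_finite (n m a e : ℕ) : (WP n m a e).Finite :=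
  bdd_finite (fun w hw => hw.1.2.2.1)

lemma WP_classify (n m a : ℕ) (hn : 3 ≤ n) (hm : 2 ≤ m) (ha1 : 1 ≤ a) (ha2 : a ≤ m - 1) :
    W n m a = WP n m a (a - 1) ∪ WP n m a a ∪ WP n m a m := by
  ext w
  constructor
  · intro hw
    have hmem := hw
    obtain ⟨hcat, havd, hle, ⟨p, hp⟩, hpos, hl⟩ := hw
    have hstep := hcat.2.2 (n - 2) (by omega)
    have e1 : w ⟨n - 2 + 1, by omega⟩ = w ⟨n - 1, by omega⟩ :=
      windex w (by omega) (by omega) (by omega)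
    have hble : w ⟨n - 2, by omega⟩ ≤ m := hle _
    have hge1 : 1 ≤ w ⟨n - 2, by omega⟩ := hcat.1 _
    -- trichotomy for b := w ⟨n-2⟩
    rcases (show w ⟨n - 2, by omega⟩ = a - 1 ∨ w ⟨n - 2, by omega⟩ = a ∨
        a < w ⟨n - 2, by omega⟩ by omega) with hb | hb | hb
    · exact Or.inl (Or.inl ⟨hmem, fun _ => hb⟩)
    · exact Or.inl (Or.inr ⟨hmem, fun _ => hb⟩)
    · -- penultimate letter exceeds a: must equal m
      refine Or.inr ⟨hmem, fun _ => ?_⟩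
      by_contra hne
      have hblt : w ⟨n - 2, by omega⟩ < m := by omega
      have pne1 : p.1 ≠ n - 1 := by
        intro hc
        have ep : p = ⟨n - 1, by omega⟩ := Fin.ext (by simp [hc])
        rw [ep] at hp
        omega
      have pne2 : p.1 ≠ n - 2 := by
        intro hc
        have ep : p = ⟨n - 2, by omega⟩ := Fin.ext (by simp [hc])
        rw [ep] at hp
        omega
      have hplt : p.1 < n - 2 := by have := p.2; omega
      obtain ⟨i, hik, hi⟩ := cat_ivt hcat p.1 p.2 (w ⟨n - 2, by omega⟩) (by omega)
        (by rw [show (⟨p.1, p.2⟩ : Fin n) = p from rfl, hp]; omega)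
      exact havd ⟨i, n - 2, by omega, by omega, hi, by omega⟩
  · rintro ((⟨h, _⟩ | ⟨h, _⟩) | ⟨h, _⟩) <;> exact h

lemma card_AB (n m a e : ℕ) (hn : 3 ≤ n) (hm : 2 ≤ m) (ha1 : 1 ≤ a) (ha2 : a ≤ m - 1)
    (he1 : a - 1 ≤ e) (he2 : e ≤ a) : (WP n m a e).ncard = u (n - 1) m e := by
  have hlast : ∀ w ∈ WP n m a e, w ⟨n - 1, by omega⟩ = a := by
    rintro w ⟨⟨_, _, _, _, hpos, hl⟩, _⟩; exact hl
  have him : tr1 '' WP n m a e = W (n - 1) m e := by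
    ext v
    constructor
    · rintro ⟨w, ⟨⟨hcat, havd, hle, ⟨p, hp⟩, hpos, hl⟩, hpen⟩, rfl⟩
      have hpen := hpen (by omega)
      have pne1 : p.1 < n - 1 := by
        rcases Nat.lt_or_ge p.1 (n - 1) with hc | hc
        · exact hc
        · exfalso
          have ep : p = ⟨n - 1, by omega⟩ := Fin.ext (by simp; have := p.2; omega)
          rw [ep] at hp
          omega
      refine ⟨tr1_cat hcat, tr1_avoid havd, fun i => hle _, ⟨⟨p.1, pne1⟩, ?_⟩, by omega, ?_⟩
      · have : tr1 w ⟨p.1, pne1⟩ = w p := rfl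
        rw [this]; exact hp
      · rw [tr1_eq w (by omega) (by omega), windex w (show n - 1 - 1 = n - 2 by omega)
          (by omega) (by omega)]
        exact hpen
    · rintro ⟨vcat, vavd, vle, ⟨q, hq⟩, vpos, vlast⟩
      have e2 : v ⟨n - 2, by omega⟩ = v ⟨n - 1 - 1, by omega⟩ :=
        windex v (by omega) (by omega) (by omega)
      refine ⟨ex1 v a, ⟨⟨ex1_cat (by omega) vcat (by omega) (by omega),
        ex1_avoid (by omega) vavd (by omega), fun i => ?_,
        ⟨⟨q.1, by have := q.2; omega⟩, ?_⟩, by omega,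
        ex1_last v a (by omega) (by omega)⟩, fun _ => ?_⟩, tr1_ex1 v a⟩
      · rcases Nat.lt_or_ge i.1 (n - 1) with hc | hc
        · have : ex1 v a ⟨i.1, i.2⟩ = v ⟨i.1, hc⟩ := ex1_lt v a hc i.2
          simp only [Fin.eta] at this
          rw [this]; exact vle _
        · have : ex1 v a ⟨i.1, i.2⟩ = a := ex1_last v a (by omega) i.2
          simp only [Fin.eta] at this
          rw [this]; omega
      · rw [ex1_lt v a (by have := q.2; omega) (by have := q.2; omega)]
        rw [show (⟨q.1, q.2⟩ : Fin (n - 1)) = q from rfl]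
        exact hq
      · rw [ex1_lt v a (by omega) (by omega)]
        omega
  rw [u_eq, ← him, Set.ncard_image_of_injOn (tr1_injOn a _ (by omega) hlast)]

lemma card_C (n m a : ℕ) (hn : 3 ≤ n) (hm : 2 ≤ m) (ha1 : 1 ≤ a) (ha2 : a ≤ m - 1) :
    (WP n m a m).ncard = u (n - 2) (m - 1) (m - 1) := by
  have hlastpair : ∀ w ∈ WP n m a m, w ⟨n - 2, by omega⟩ = m ∧ w ⟨n - 1, by omega⟩ = a := by
    rintro w ⟨⟨_, _, _, _, hpos, hl⟩, hpen⟩; exact ⟨hpen (by omega), hl⟩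
  have him : tr2 '' WP n m a m = W (n - 2) (m - 1) (m - 1) := by
    ext v
    constructor
    · rintro ⟨w, ⟨⟨hcat, havd, hle, hex, hpos, hl⟩, hpen⟩, rfl⟩
      have hpen := hpen (by omega)
      -- all letters before position n-2 are < m
      have hlt : ∀ i : ℕ, ∀ hi : i < n - 2, w ⟨i, by omega⟩ < m := by
        intro i hi
        rcases Nat.lt_or_ge (w ⟨i, by omega⟩) m with hc | hc
        · exact hc
        · exfalso
          have heq : w ⟨i, by omega⟩ = m := le_antisymm (hle _) hc
          refine havd ⟨i, n - 2, by omega, hi, ?_, ?_⟩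
          · omega
          · have e1 : w ⟨n - 2 + 1, by omega⟩ = w ⟨n - 1, by omega⟩ :=
              windex w (by omega) (by omega) (by omega)
            omega
      -- the letter at n-3 equals m-1
      have hpen3 : w ⟨n - 3, by omega⟩ = m - 1 := by
        have hstep := hcat.2.2 (n - 3) (by omega)
        have e1 : w ⟨n - 3 + 1, by omega⟩ = w ⟨n - 2, by omega⟩ :=
          windex w (by omega) (by omega) (by omega)
        have := hlt (n - 3) (by omega)
        omega
      refine ⟨tr2_cat hcat, tr2_avoid havd, fun i => ?_, ⟨⟨n - 3, by omega⟩, ?_⟩,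
        by omega, ?_⟩
      · have : tr2 w i = w ⟨i.1, by have := i.2; omega⟩ := rfl
        rw [this]
        have := hlt i.1 i.2
        omega
      · rw [tr2_eq w (by omega) (by omega)]
        exact hpen3
      · rw [tr2_eq w (by omega) (by omega), windex w (show n - 2 - 1 = n - 3 by omega)
          (by omega) (by omega)]
        exact hpen3
    · rintro ⟨vcat, vavd, vle, ⟨q, hq⟩, vpos, vlast⟩
      have e2 : v ⟨n - 3, by omega⟩ = v ⟨n - 2 - 1, by omega⟩ :=
        windex v (by omega) (by omega) (by omega)
      refine ⟨ex2 v m a, ⟨⟨ex2_cat hn vcat (by omega) (by omega) (by omega) (by omega),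
        ex2_avoid hn vavd (fun i => by have := vle i; omega), fun i => ?_,
        ⟨⟨n - 2, by omega⟩, ex2_mid v m a rfl (by omega)⟩, by omega,
        ex2_last v m a (by omega) (by omega)⟩, fun _ => ex2_mid v m a rfl (by omega)⟩,
        tr2_ex2 v m a⟩
      rcases Nat.lt_or_ge i.1 (n - 2) with hc | hc
      · have : ex2 v m a ⟨i.1, i.2⟩ = v ⟨i.1, hc⟩ := ex2_lt v m a hc i.2
        simp only [Fin.eta] at this
        rw [this]
        have := vle ⟨i.1, hc⟩
        omega
      · rcases Nat.eq_or_lt_of_le hc with hc2 | hc2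
        · have : ex2 v m a ⟨i.1, i.2⟩ = m := ex2_mid v m a (by omega) i.2
          simp only [Fin.eta] at this
          rw [this]
        · have : ex2 v m a ⟨i.1, i.2⟩ = a := ex2_last v m a (by omega) i.2
          simp only [Fin.eta] at this
          rw [this]; omega
  rw [u_eq, ← him, Set.ncard_image_of_injOn (tr2_injOn m a _ (by omega) hlastpair)]

lemma case_i (n m a : ℕ) (hn : 3 ≤ n) (hm : 2 ≤ m) (ha1 : 1 ≤ a) (ha2 : a ≤ m - 1) :
    u n m a = u (n - 1) m (a - 1) + u (n - 1) m a + u (n - 2) (m - 1) (m - 1) := by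
  rw [u_eq, WP_classify n m a hn hm ha1 ha2,
    ncard_union3 _ _ _ (WP_finite _ _ _ _) (WP_finite _ _ _ _) (WP_finite _ _ _ _)
      (WP_disj (by omega) (by omega)) (WP_disj (by omega) (by omega))
      (WP_disj (by omega) (by omega)),
    card_AB n m a (a - 1) hn hm ha1 ha2 (by omega) (by omega),
    card_AB n m a a hn hm ha1 ha2 (by omega) (by omega),
    card_C n m a hn hm ha1 ha2]

theorem catalan_2_21_recurrence :
    (∀ n : ℕ, 1 ≤ n → u n 1 1 = 1) ∧
    u 2 2 1 = 0 ∧ u 2 2 2 = 1 ∧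
    ∀ n m : ℕ, 3 ≤ n → 2 ≤ m → m ≤ n →
      (∀ a : ℕ, 1 ≤ a → a ≤ m - 1 →
          u n m a = u (n - 1) m (a - 1) + u (n - 1) m a + u (n - 2) (m - 1) (m - 1)) ∧
      u n m m = u (n - 1) (m - 1) (m - 1) + u (n - 1) m (m - 1) + u (n - 1) m m := by
  exact ⟨u_one, u_2_2_1, u_2_2_2, fun n m hn hm _ =>
    ⟨fun a ha1 ha2 => case_i n m a hn hm ha1 ha2, case_ii n m hn hm⟩⟩
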